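/- arXiv:1911.00058 — 2 statements merged into one kernel-verified Lean document; each statement's English description precedes it below -/
import Mathlib

section
/- Assume c_m ≠ 0 and fix τ₀ ∈ X₀. Let f_{τ₀} : ℕⁿ → K be the (unique) solution of the difference equation Σ_{0 ≤ α ≤ m} c_α f(x+α) = 0 (for all x ∈ ℕⁿ) whose restriction to X₀ is the delta function at τ₀ (equal to 1 at τ₀ and 0 at every other point of X₀), i.e. the discrete Green's function. Then its generating series G_{τ₀} = Σ_{x ∈ ℕⁿ} f_{τ₀}(x) · w^{x+I} satisfies Q · G_{τ₀} = w^{τ₀+I} · Σ_{α ≤ m, ¬(α ≤ τ₀)} c_α · w^{m−α} in K⟦w₁,…,wₙ⟧; in particular, since Q has nonzero constant term c_m, the series G_{τ₀} is rational. -/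
def IsRationalMvPowerSeries {n : ℕ} {K : Type*} [Field K]
    (H : MvPowerSeries (Fin n) K) : Prop :=
  ∃ A B : MvPolynomial (Fin n) K, MvPolynomial.coeff 0 B ≠ 0 ∧
    (B : MvPowerSeries (Fin n) K) * H = (A : MvPowerSeries (Fin n) K)

/-!
Write `G = w^I · F` with `F = Σ_x f(x) w^x`. The coefficient of `w^e` in `Q · F` is
`Σ_{α ≤ m, m - α ≤ e} c_α f(e - (m - α))`. If `m ≤ e` all `α ≤ m` occur and, with `x = e - m`,
this is the left side of the difference equation at `x`, hence `0`. Otherwise every argument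
`e - (m - α)` lies in `X₀`, where `f` is the delta function at `τ₀`, so what remains are the `c_α`
with `e = τ₀ + (m - α)`; for these `α ≤ τ₀` is impossible, since it would give `m ≤ e`.
Hence `Q · F = w^{τ₀} · Σ_{α ≤ m, ¬ α ≤ τ₀} c_α w^{m - α}`, and since `Q(0) = c_m ≠ 0` this
identity exhibits `G` as rational.
-/

open MvPowerSeries Finset

theorem le_add_tsub_iff_le_of_le {α : Type*} [AddCommMonoid α] [PartialOrder α]
    [IsOrderedCancelAddMonoid α] [Sub α] [OrderedSub α] [ExistsAddOfLE α] {a b c : α}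
    (h : b ≤ a) : a ≤ c + (a - b) ↔ b ≤ c := by
  calc a ≤ c + (a - b) ↔ b + (a - b) ≤ c + (a - b) := by rw [add_tsub_cancel_of_le h]
    _ ↔ b ≤ c := add_le_add_iff_right _

theorem MvPolynomial.coe_sum_monomial {σ R ι : Type*} [CommSemiring R] (s : Finset ι)
    (d : ι → σ →₀ ℕ) (a : ι → R) :
    ((∑ i ∈ s, MvPolynomial.monomial (d i) (a i) : MvPolynomial σ R) : MvPowerSeries σ R) =
      ∑ i ∈ s, MvPowerSeries.monomial (d i) (a i) := by
  rw [← MvPolynomial.coeToMvPowerSeries.ringHom_apply, map_sum]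
  simp only [MvPolynomial.coeToMvPowerSeries.ringHom_apply, MvPolynomial.coe_monomial]

theorem MvPowerSeries.coeff_sum_monomial_mul {σ R ι : Type*} [CommSemiring R] (s : Finset ι)
    (d : ι → σ →₀ ℕ) (a : ι → R) (φ : MvPowerSeries σ R) (e : σ →₀ ℕ) :
    coeff e ((∑ i ∈ s, monomial (d i) (a i)) * φ) =
      ∑ i ∈ s, if d i ≤ e then a i * coeff (e - d i) φ else 0 := by
  simp only [sum_mul, map_sum, coeff_monomial_mul]

section GreenFunction

variable {σ R : Type*} [DecidableEq σ] [CommSemiring R]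

/-- `Q(w) = w^m P(1/w)` for the characteristic polynomial `P(z) = Σ_{α ≤ m} c_α z^α`. -/
noncomputable def reflectedCharPoly (m : σ →₀ ℕ) (c : (σ →₀ ℕ) → R) : MvPolynomial σ R :=
  ∑ α ∈ Iic m, MvPolynomial.monomial (m - α) (c α)

theorem coe_reflectedCharPoly (m : σ →₀ ℕ) (c : (σ →₀ ℕ) → R) :
    (reflectedCharPoly m c : MvPowerSeries σ R) = ∑ α ∈ Iic m, monomial (m - α) (c α) :=
  MvPolynomial.coe_sum_monomial _ _ _

theorem coeff_zero_reflectedCharPoly (m : σ →₀ ℕ) (c : (σ →₀ ℕ) → R) :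
    MvPolynomial.coeff 0 (reflectedCharPoly m c) = c m := by
  rw [reflectedCharPoly, MvPolynomial.coeff_sum, sum_eq_single_of_mem m (mem_Iic.mpr le_rfl)]
  · simp
  · intro α hα hαm
    rw [MvPolynomial.coeff_monomial,
      if_neg fun h => hαm (le_antisymm (mem_Iic.mp hα) (tsub_eq_zero_iff_le.mp h))]

variable {m τ₀ : σ →₀ ℕ} {c : (σ →₀ ℕ) → R} {f : MvPowerSeries σ R}

theorem coeff_reflectedCharPoly_mul_of_le
    (hf : ∀ x, ∑ α ∈ Iic m, c α * coeff (x + α) f = 0) {e : σ →₀ ℕ} (he : m ≤ e) :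
    coeff e ((reflectedCharPoly m c : MvPowerSeries σ R) * f) = 0 := by
  rw [coe_reflectedCharPoly, coeff_sum_monomial_mul, ← hf (e - m)]
  refine sum_congr rfl fun α hα => ?_
  have hαm : α ≤ m := mem_Iic.mp hα
  rw [if_pos (tsub_le_self.trans he), tsub_tsub_assoc he hαm]

theorem coeff_reflectedCharPoly_mul_of_not_le
    (hδ : ∀ x, ¬ m ≤ x → coeff x f = if x = τ₀ then 1 else 0) {e : σ →₀ ℕ} (he : ¬ m ≤ e) :
    coeff e ((reflectedCharPoly m c : MvPowerSeries σ R) * f) =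
      ∑ α ∈ Iic m with ¬ α ≤ τ₀, if e = τ₀ + (m - α) then c α else 0 := by
  rw [coe_reflectedCharPoly, coeff_sum_monomial_mul, sum_filter]
  refine sum_congr rfl fun α hα => ?_
  have hαm : α ≤ m := mem_Iic.mp hα
  by_cases hαe : m - α ≤ e
  · have hX₀ : ¬ m ≤ e - (m - α) := fun h => he (h.trans tsub_le_self)
    have hτ : e - (m - α) = τ₀ ↔ e = τ₀ + (m - α) := tsub_eq_iff_eq_add_of_le hαe
    rw [if_pos hαe, hδ _ hX₀]
    by_cases heτ : e = τ₀ + (m - α)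
    · have hατ : ¬ α ≤ τ₀ := by rwa [← le_add_tsub_iff_le_of_le hαm, ← heτ]
      simp [hατ, heτ]
    · simp [hτ, heτ]
  · have heτ : e ≠ τ₀ + (m - α) := fun h => hαe (h ▸ le_add_self)
    simp [hαe, heτ]

theorem reflectedCharPoly_mul_eq_of_recurrence
    (hf : ∀ x, ∑ α ∈ Iic m, c α * coeff (x + α) f = 0)
    (hδ : ∀ x, ¬ m ≤ x → coeff x f = if x = τ₀ then 1 else 0) :
    (reflectedCharPoly m c : MvPowerSeries σ R) * f =
      monomial τ₀ 1 * ∑ α ∈ Iic m with ¬ α ≤ τ₀, monomial (m - α) (c α) := by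
  ext e
  simp only [mul_sum, monomial_mul_monomial, one_mul, map_sum, coeff_monomial]
  by_cases he : m ≤ e
  · rw [coeff_reflectedCharPoly_mul_of_le hf he]
    refine (sum_eq_zero fun α hα => if_neg fun heτ => ?_).symm
    obtain ⟨hα, hατ⟩ := mem_filter.mp hα
    exact hατ ((le_add_tsub_iff_le_of_le (mem_Iic.mp hα)).mp (heτ ▸ he))
  · exact coeff_reflectedCharPoly_mul_of_not_le hδ he

end GreenFunction

theorem discrete_green_function_generating_series_general
    (n : ℕ) (K : Type*) [Field K]
    (m : Fin n →₀ ℕ) (c : (Fin n →₀ ℕ) → K) (hc : c m ≠ 0)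
    (τ₀ : Fin n →₀ ℕ)
    (f : (Fin n →₀ ℕ) → K)
    (hf : ∀ x : Fin n →₀ ℕ, ∑ α ∈ Finset.Iic m, c α * f (x + α) = 0)
    (hδ : ∀ x : Fin n →₀ ℕ, ¬ m ≤ x → f x = if x = τ₀ then 1 else 0)
    (I : Fin n →₀ ℕ)
    (G : MvPowerSeries (Fin n) K)
    (hG : ∀ e : Fin n →₀ ℕ,
      MvPowerSeries.coeff e G = if I ≤ e then f (e - I) else 0)
    (Q : MvPowerSeries (Fin n) K)
    (hQ : Q = ∑ α ∈ Finset.Iic m, (MvPowerSeries.monomial (m - α)) (c α)) :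
    Q * G = (MvPowerSeries.monomial (τ₀ + I)) 1 *
        ∑ α ∈ (Finset.Iic m).filter (fun α => ¬ α ≤ τ₀),
          (MvPowerSeries.monomial (m - α)) (c α) ∧
      IsRationalMvPowerSeries G := by
  obtain ⟨F, hF⟩ : ∃ F : MvPowerSeries (Fin n) K, ∀ x, coeff x F = f x := ⟨f, fun _ => rfl⟩
  simp_rw [← hF] at hf hδ
  have hQ' : Q = reflectedCharPoly m c := hQ.trans (coe_reflectedCharPoly m c).symm
  have hGF : G = monomial I 1 * F := by
    ext e
    rw [hG, coeff_monomial_mul, one_mul, hF]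
  have key : Q * G = monomial (τ₀ + I) 1 *
      ∑ α ∈ Iic m with ¬ α ≤ τ₀, monomial (m - α) (c α) := by
    rw [hGF, mul_left_comm, hQ', reflectedCharPoly_mul_eq_of_recurrence hf hδ, ← mul_assoc,
      monomial_mul_monomial, one_mul, add_comm]
  refine ⟨key, MvPolynomial.monomial (τ₀ + I) 1 *
      ∑ α ∈ Iic m with ¬ α ≤ τ₀, MvPolynomial.monomial (m - α) (c α),
    reflectedCharPoly m c, by rwa [coeff_zero_reflectedCharPoly], ?_⟩
  rw [← hQ', key, MvPolynomial.coe_mul, MvPolynomial.coe_monomial,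
    MvPolynomial.coe_sum_monomial]

/-- Proposition 1 of the paper: the generating series `G_{τ₀}` of the discrete Green's
function `f_{τ₀}` (the solution of the difference equation whose initial data is the
delta function at `τ₀ ∈ X₀`) satisfies
`Q · G_{τ₀} = w^{τ₀+I} · Σ_{α ≤ m, ¬(α ≤ τ₀)} c_α w^{m−α}`; in particular `G_{τ₀}` is
rational. -/
theorem discrete_green_function_generating_series
    (n : ℕ) (hn : 1 ≤ n) (K : Type*) [Field K]
    (m : Fin n →₀ ℕ) (c : (Fin n →₀ ℕ) → K) (hc : c m ≠ 0)
    (τ₀ : Fin n →₀ ℕ) (hτ₀ : ¬ m ≤ τ₀)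
    (f : (Fin n →₀ ℕ) → K)
    (hf : ∀ x : Fin n →₀ ℕ, ∑ α ∈ Finset.Iic m, c α * f (x + α) = 0)
    (hδ : ∀ x : Fin n →₀ ℕ, ¬ m ≤ x → f x = if x = τ₀ then 1 else 0)
    (I : Fin n →₀ ℕ) (hI : ∀ j, I j = 1)
    (G : MvPowerSeries (Fin n) K)
    (hG : ∀ e : Fin n →₀ ℕ,
      MvPowerSeries.coeff e G = if I ≤ e then f (e - I) else 0)
    (Q : MvPowerSeries (Fin n) K)
    (hQ : Q = ∑ α ∈ Finset.Iic m, (MvPowerSeries.monomial (m - α)) (c α)) :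
    Q * G = (MvPowerSeries.monomial (τ₀ + I)) 1 *
        ∑ α ∈ (Finset.Iic m).filter (fun α => ¬ α ≤ τ₀),
          (MvPowerSeries.monomial (m - α)) (c α) ∧
      IsRationalMvPowerSeries G :=
  discrete_green_function_generating_series_general n K m c hc τ₀ f hf hδ I G hG Q hQ
end

section
/- For x, y ∈ ℕ let r(x,y) be the number of sequences a₁a₂⋯a_x with a₁ = 0 and a_j ∈ {0,1} for 2 ≤ j ≤ x, having exactly y isolated elements, where a_j is called isolated if it differs from every element in a neighboring position (a_j ≠ a_{j−1} whenever j > 1, and a_j ≠ a_{j+1} whenever j < x; in particular, for x = 1 the single element is isolated). Let R = Σ_{(x,y) ∈ ℕ²} r(x,y) · u^x v^y ∈ ℚ⟦u,v⟧. Then (1 − u − u·v − u² + u²·v) · R = 1 − u in ℚ⟦u,v⟧. -/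
/-!
Appending a letter `b` to a sequence `a` of length `n + 1` changes the isolated letters only at the
end: if `b` differs from the last letter of `a`, then `b` is isolated and the count goes up by one;
if `b` repeats it, then `b` is not isolated and the old last letter loses its isolation, if it had
it. Let `A = isolatedLastCount` and `B = joinedLastCount`: `A n y` and `B n y` count the
sequences of length `n + 1` with `y` isolated letters whose last letter is, resp. is not, isolated.
Then `r (n + 1) y = A n y + B n y`, `A n (y + 1) = r n y`, `A n 0 = 0` and
`B (n + 1) y = A n (y + 1) + B n y`; eliminating `B` gives
`r (n + 2) y + A n y = r (n + 1) y + A (n + 1) y + r n y`. Since `A x y` is the coefficient of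
`uˣ vʸ` in `v R`, this is the coefficient form of `(1 − u − u v − u² + u² v) R = 1 − u`.
-/

/-- `a j` is isolated in the sequence `a` if it differs from every element in a
neighboring position. -/
def IsIsolated {x : ℕ} (a : Fin x → Bool) (i : Fin x) : Prop :=
  ∀ j : Fin x, ((j : ℕ) + 1 = (i : ℕ) ∨ (i : ℕ) + 1 = (j : ℕ)) → a i ≠ a j

/-- `seqCount x y` is the number of sequences `a₁a₂⋯a_x` with `a₁ = 0` and
`a_j ∈ {0,1}`, having exactly `y` isolated elements. -/
noncomputable def seqCount (x y : ℕ) : ℕ :=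
  Nat.card {a : Fin x → Bool //
    (∀ i : Fin x, (i : ℕ) = 0 → a i = false) ∧
    Nat.card {i : Fin x // IsIsolated a i} = y}

open Finset

theorem Fin.card_filter_bool_snoc {n : ℕ} (Q : (Fin (n + 2) → Bool) → Prop) [DecidablePred Q] :
    #{a | Q a} = #{a : Fin (n + 1) → Bool | Q (Fin.snoc a (!a (Fin.last n)))} +
      #{a : Fin (n + 1) → Bool | Q (Fin.snoc a (a (Fin.last n)))} := by
  have sum_bool (a : Fin (n + 1) → Bool) : ∑ b : Bool, (if Q (Fin.snoc a b) then 1 else 0) =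
      (if Q (Fin.snoc a (!a (Fin.last n))) then 1 else 0) +
        (if Q (Fin.snoc a (a (Fin.last n))) then 1 else 0) := by
    rw [Fintype.sum_bool]
    cases a (Fin.last n) <;> simp [add_comm]
  simp only [card_filter, ← sum_add_distrib, ← sum_bool]
  rw [← Fintype.sum_prod_type_right']
  exact ((Fin.snocEquiv fun _ => Bool).sum_comp fun a => if Q a then 1 else 0).symm

theorem MvPowerSeries.coeff_X_pow_mul' {σ R : Type*} [CommSemiring R] [DecidableEq σ]
    (φ : MvPowerSeries σ R) (s : σ) (k : ℕ) (e : σ →₀ ℕ) :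
    coeff e (X s ^ k * φ) = if k ≤ e s then coeff (e - Finsupp.single s k) φ else 0 := by
  rw [X_pow_eq, coeff_monomial_mul, one_mul]
  exact if_congr Finsupp.single_le_iff rfl rfl

instance {x : ℕ} (a : Fin x → Bool) : DecidablePred (IsIsolated a) := fun _ =>
  inferInstanceAs (Decidable (∀ _, _))

def isolatedCount {x : ℕ} (a : Fin x → Bool) : ℕ := #{i | IsIsolated a i}

section snoc

variable {n : ℕ} (a : Fin (n + 1) → Bool) (b : Bool)

theorem isIsolated_snoc_last :
    IsIsolated (Fin.snoc a b : Fin (n + 2) → Bool) (Fin.last (n + 1)) ↔ b ≠ a (Fin.last n) := by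
  simp only [IsIsolated, Fin.forall_fin_succ' (n := n + 1), Fin.snoc_castSucc, Fin.snoc_last,
    Fin.val_castSucc, Fin.val_last]
  constructor
  · exact fun h => h.1 (Fin.last n) (by simp)
  · intro h
    refine ⟨fun j hj => ?_, by omega⟩
    have : j = Fin.last n := Fin.ext (by simp at hj ⊢; omega)
    exact this ▸ h

theorem isIsolated_snoc_castSucc (i : Fin (n + 1)) :
    IsIsolated (Fin.snoc a b : Fin (n + 2) → Bool) i.castSucc ↔
      IsIsolated a i ∧ (i = Fin.last n → a i ≠ b) := by
  simp only [IsIsolated, Fin.forall_fin_succ' (n := n + 1), Fin.snoc_castSucc, Fin.snoc_last,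
    Fin.val_castSucc, Fin.val_last, Fin.ext_iff]
  have := i.isLt
  exact and_congr Iff.rfl ⟨fun h hi => h (by omega), fun h hi => h (by omega)⟩

theorem isolatedCount_snoc_of_ne (h : b ≠ a (Fin.last n)) :
    isolatedCount (Fin.snoc a b : Fin (n + 2) → Bool) = isolatedCount a + 1 := by
  simp only [isolatedCount, card_filter, Fin.sum_univ_castSucc (n := n + 1),
    isIsolated_snoc_castSucc, isIsolated_snoc_last, if_pos h]
  congr 2
  ext i
  exact if_congr ⟨fun h' => h'.1, fun h' => ⟨h', fun hi => hi ▸ h.symm⟩⟩ rfl rfl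

theorem isolatedCount_snoc_self :
    isolatedCount (Fin.snoc a (a (Fin.last n)) : Fin (n + 2) → Bool) +
      (if IsIsolated a (Fin.last n) then 1 else 0) = isolatedCount a := by
  simp only [isolatedCount, card_filter, Fin.sum_univ_castSucc (n := n + 1),
    Fin.sum_univ_castSucc (n := n), isIsolated_snoc_castSucc, isIsolated_snoc_last]
  simp [Fin.castSucc_ne_last]

end snoc

theorem isolatedCount_eq_natCard {x : ℕ} (a : Fin x → Bool) :
    isolatedCount a = Nat.card {i // IsIsolated a i} := by
  rw [Nat.card_eq_fintype_card, Fintype.card_subtype, isolatedCount]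

theorem seqCount_eq_card (x y : ℕ) : seqCount x y =
    #{a : Fin x → Bool | (∀ i : Fin x, (i : ℕ) = 0 → a i = false) ∧ isolatedCount a = y} := by
  simp only [seqCount, Nat.card_eq_fintype_card, Fintype.card_subtype, isolatedCount_eq_natCard]

theorem seqCount_zero (y : ℕ) : seqCount 0 y = if y = 0 then 1 else 0 := by
  rw [seqCount_eq_card]
  split_ifs with hy <;> simp [isolatedCount, hy, Ne.symm]

theorem seqCount_succ_eq_card (n y : ℕ) :
    seqCount (n + 1) y = #{a : Fin (n + 1) → Bool | a 0 = false ∧ isolatedCount a = y} := by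
  have first_false (a : Fin (n + 1) → Bool) :
      (∀ i : Fin (n + 1), (i : ℕ) = 0 → a i = false) ↔ a 0 = false :=
    ⟨fun h => h 0 rfl, fun h i hi => (Fin.ext hi : i = 0) ▸ h⟩
  simp only [seqCount_eq_card, first_false]

def isolatedLastCount (n y : ℕ) : ℕ :=
  #{a : Fin (n + 1) → Bool | a 0 = false ∧ isolatedCount a = y ∧ IsIsolated a (Fin.last n)}

def joinedLastCount (n y : ℕ) : ℕ :=
  #{a : Fin (n + 1) → Bool | a 0 = false ∧ isolatedCount a = y ∧ ¬IsIsolated a (Fin.last n)}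

theorem seqCount_succ (n y : ℕ) :
    seqCount (n + 1) y = isolatedLastCount n y + joinedLastCount n y := by
  rw [isolatedLastCount, joinedLastCount, seqCount_succ_eq_card,
    ← card_filter_add_card_filter_not (p := fun a => IsIsolated a (Fin.last n))]
  simp only [filter_filter, and_assoc]

theorem joinedLastCount_zero (y : ℕ) : joinedLastCount 0 y = 0 := by
  simp [joinedLastCount, IsIsolated]

theorem isolatedLastCount_zero (y : ℕ) : isolatedLastCount 0 y = if y = 1 then 1 else 0 := by
  have isolated (a : Fin 1 → Bool) : IsIsolated a 0 := by simp [IsIsolated]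
  have count (a : Fin 1 → Bool) : isolatedCount a = 1 := by
    simp [isolatedCount, filter_singleton, isolated]
  split_ifs with hy <;> simp [isolatedLastCount, count, isolated, hy, Ne.symm]
  decide

theorem isolatedLastCount_succ (n y : ℕ) : isolatedLastCount (n + 1) y =
    #{a : Fin (n + 1) → Bool | a 0 = false ∧ isolatedCount a + 1 = y} := by
  rw [isolatedLastCount, Fin.card_filter_bool_snoc]
  simp [isIsolated_snoc_last, isolatedCount_snoc_of_ne]

theorem joinedLastCount_succ (n y : ℕ) :
    joinedLastCount (n + 1) y = isolatedLastCount n (y + 1) + joinedLastCount n y := by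
  have count_snoc_self (a : Fin (n + 1) → Bool) :
      isolatedCount (Fin.snoc a (a (Fin.last n)) : Fin (n + 2) → Bool) = y ↔
        isolatedCount a = y + if IsIsolated a (Fin.last n) then 1 else 0 := by
    have := isolatedCount_snoc_self a
    omega
  rw [joinedLastCount, Fin.card_filter_bool_snoc]
  simp only [Fin.snoc_apply_zero, isIsolated_snoc_last, count_snoc_self, Bool.not_ne_self,
    not_true_eq_false, and_false, filter_false, card_empty, ne_eq, not_false_eq_true, and_true,
    zero_add, isolatedLastCount, joinedLastCount]
  rw [← card_filter_add_card_filter_not (p := fun a => IsIsolated a (Fin.last n)), filter_filter,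
    filter_filter]
  congr 2 <;> ext a <;> by_cases h : IsIsolated a (Fin.last n) <;> simp [h]

theorem isolatedLastCount_eq (n y : ℕ) :
    isolatedLastCount n y = if y = 0 then 0 else seqCount n (y - 1) := by
  rcases n with _ | n
  · rw [isolatedLastCount_zero, seqCount_zero]
    split_ifs <;> omega
  · rw [isolatedLastCount_succ, seqCount_succ_eq_card]
    rcases y with _ | y <;> simp

theorem seqCount_add_two (n y : ℕ) : seqCount (n + 2) y + isolatedLastCount n y =
    seqCount (n + 1) y + isolatedLastCount (n + 1) y + seqCount n y := by
  have := isolatedLastCount_eq n (y + 1)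
  simp only [add_eq_zero, one_ne_zero, and_false, if_false, add_tsub_cancel_right] at this
  rw [seqCount_succ (n + 1), joinedLastCount_succ, seqCount_succ n, this]
  ring

theorem seqCount_sub_shifts (x y : ℕ) :
    (seqCount x y : ℚ)
      - (if 1 ≤ x then (seqCount (x - 1) y + isolatedLastCount (x - 1) y : ℚ) else 0)
      - (if 2 ≤ x then (seqCount (x - 2) y - isolatedLastCount (x - 2) y : ℚ) else 0)
      = (if x = 0 ∧ y = 0 then 1 else 0) - (if x = 1 ∧ y = 0 then 1 else 0) := by
  rcases x with _ | _ | n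
  · simp [seqCount_zero]
  · simp [seqCount_succ 0, joinedLastCount_zero, seqCount_zero]
  · have recurrence : (seqCount (n + 2) y + isolatedLastCount n y : ℚ) =
        seqCount (n + 1) y + isolatedLastCount (n + 1) y + seqCount n y :=
      mod_cast seqCount_add_two n y
    simp only [le_add_iff_nonneg_left, zero_le, ↓reduceIte, add_tsub_cancel_right,
      Nat.reduceSubDiff, Nat.add_eq_zero_iff, one_ne_zero, and_false, false_and, Nat.add_eq_right,
      sub_self]
    linear_combination recurrence

open MvPowerSeries in
/-- The two-variable generating function `R = Σ r(x,y) uˣ vʸ` of the counting function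
`r(x,y)` of binary sequences starting with `0` with exactly `y` isolated elements
satisfies `(1 − u − u·v − u² + u²·v) · R = 1 − u` in `ℚ⟦u,v⟧`. -/
theorem isolated_count_generating_function
    (R : MvPowerSeries (Fin 2) ℚ)
    (hR : ∀ e : Fin 2 →₀ ℕ, MvPowerSeries.coeff e R = seqCount (e 0) (e 1)) :
    (1 - X 0 - X 0 * X 1 - (X 0) ^ 2 + (X 0) ^ 2 * X 1) * R
      = 1 - (X 0 : MvPowerSeries (Fin 2) ℚ) := by
  have coeff_vR (e : Fin 2 →₀ ℕ) :
      coeff e ((X 1 : MvPowerSeries (Fin 2) ℚ) ^ 1 * R) = (isolatedLastCount (e 0) (e 1) : ℚ) := by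
    rw [coeff_X_pow_mul', hR, isolatedLastCount_eq]
    split_ifs <;> simp_all
  have factor : (1 - X 0 - X 0 * X 1 - (X 0) ^ 2 + (X 0) ^ 2 * X 1) * R =
      R - X 0 ^ 1 * (R + X 1 ^ 1 * R) - X 0 ^ 2 * (R - X 1 ^ 1 * R) := by ring
  ext e
  rw [factor]
  simp only [map_sub, map_add, coeff_X_pow_mul', hR, coeff_vR, coeff_one, coeff_X,
    Finsupp.ext_iff, Fin.forall_fin_two, Finsupp.tsub_apply, Finsupp.single_apply, Fin.isValue,
    ↓reduceIte, zero_ne_one, tsub_zero, Finsupp.coe_zero, Pi.zero_apply]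
  exact seqCount_sub_shifts (e 0) (e 1)
end
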